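/- Let p ≥ 1 and let ⋆ denote circular convolution on ℝ^p, (a ⋆ b)_r = Σ_{s=0}^{p−1} a_s b_{(r−s) mod p}, with filters of length n ≤ p acting after zero-padding to length p. Fix channel counts c₀, c₁, c₂ ≥ 1 and filter lengths n_u, n_v ≤ p, and let the parameter be θ = ((u_{k,j})_{1≤k≤c₂, 1≤j≤c₁}, (v_{j,i})_{1≤j≤c₁, 1≤i≤c₀}) with u_{k,j} ∈ ℝ^{n_u} and v_{j,i} ∈ ℝ^{n_v}. For x = (x^{(1)}, …, x^{(c₀)}) ∈ (ℝ^p)^{c₀} define the two-layer multi-channel convolutive ReLU network g(θ, x) = (Σ_{j=1}^{c₁} u_{k,j} ⋆ σ(Σ_{i=1}^{c₀} v_{j,i} ⋆ x^{(i)}))_{k=1}^{c₂} ∈ (ℝ^p)^{c₂}, where σ(t) = max(t, 0) is applied entrywise. For each j ∈ {1, …, c₁} define h_j(θ) = Σ_{k=1}^{c₂} ‖u_{k,j}‖² − Σ_{i=1}^{c₀} ‖v_{j,i}‖². Then for every θ, every input x such that every entry of every hidden pre-activation Σ_{i} v_{j',i} ⋆ x^{(i)} (j' = 1, …, c₁)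 is nonzero, and every w ∈ (ℝ^p)^{c₂}, the map θ' ↦ g(θ', x) is differentiable at θ and ⟨∇h_j(θ), ∂_θ g(θ, x)ᵀ w⟩ = 0; i.e., each h_j is a conservation law of the multi-channel convolutive two-layer ReLU network under Euclidean gradient flow. -/

import Mathlib

/-!
The network is invariant under the rescalings `u_{·,j} ↦ eˢ u_{·,j}`, `v_{j,·} ↦ e⁻ˢ v_{j,·}`,
because circular convolution is bilinear and the ReLU is positively homogeneous. Writing `ε` for
the weight that is `1` on the coordinates of the `u_{·,j}`, `-1` on those of the `v_{j,·}` and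
`0` elsewhere, this curve passes through `θ` with velocity `ε ⊙ θ`, so differentiating the
invariance at `s = 0` gives `∂_θ g(θ, x) (ε ⊙ θ) = 0`. Since `h_j(θ) = ∑_q ε_q θ_q²` has gradient
`2 ε ⊙ θ`, we get `⟨∇h_j(θ), ∂_θ g(θ, x)ᵀ w⟩ = ⟨∂_θ g(θ, x) ∇h_j(θ), w⟩ = 0`. The network is
differentiable at `θ` because no pre-activation sits at the kink of the ReLU.
-/

/-- Circular convolution on `ℝ^p`: `(a ⋆ b)_r = ∑ₛ a_s b_{(r−s) mod p}` (subtraction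
taken in `Fin p`, i.e. mod `p`). -/
def circConv (p : ℕ) (a b : Fin p → ℝ) : Fin p → ℝ :=
  fun r => ∑ s, a s * b (r - s)

/-- Zero-padding of a filter of length `n` to length `p`. -/
def zeroPad (p n : ℕ) (a : Fin n → ℝ) : Fin p → ℝ :=
  fun s => if h : (s : ℕ) < n then a ⟨s, h⟩ else 0

/-- Second-layer filter `u_{k,j} ∈ ℝ^{n_u}` extracted from the parameter vector. -/
def uFilt {c₀ c₁ c₂ nu nv : ℕ}
    (θ : EuclideanSpace ℝ ((Fin c₂ × Fin c₁ × Fin nu) ⊕ (Fin c₁ × Fin c₀ × Fin nv)))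
    (k : Fin c₂) (j : Fin c₁) : Fin nu → ℝ :=
  fun t => θ (Sum.inl (k, j, t))

/-- First-layer filter `v_{j,i} ∈ ℝ^{n_v}` extracted from the parameter vector. -/
def vFilt {c₀ c₁ c₂ nu nv : ℕ}
    (θ : EuclideanSpace ℝ ((Fin c₂ × Fin c₁ × Fin nu) ⊕ (Fin c₁ × Fin c₀ × Fin nv)))
    (j : Fin c₁) (i : Fin c₀) : Fin nv → ℝ :=
  fun t => θ (Sum.inr (j, i, t))

/-- Hidden pre-activation `∑ᵢ v_{j,i} ⋆ x^{(i)} ∈ ℝ^p` of channel `j`. -/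
def preAct (p : ℕ) {c₀ c₁ c₂ nu nv : ℕ}
    (θ : EuclideanSpace ℝ ((Fin c₂ × Fin c₁ × Fin nu) ⊕ (Fin c₁ × Fin c₀ × Fin nv)))
    (x : Fin c₀ → Fin p → ℝ) (j : Fin c₁) : Fin p → ℝ :=
  fun r => ∑ i, circConv p (zeroPad p nv (vFilt θ j i)) (x i) r

/-- The two-layer multi-channel convolutive ReLU network
`g(θ, x) = (∑ⱼ u_{k,j} ⋆ σ(∑ᵢ v_{j,i} ⋆ x^{(i)}))_{k=1}^{c₂}`,
with `σ(t) = max(t, 0)` applied entrywise. -/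
noncomputable def convNet (p : ℕ) {c₀ c₁ c₂ nu nv : ℕ}
    (θ : EuclideanSpace ℝ ((Fin c₂ × Fin c₁ × Fin nu) ⊕ (Fin c₁ × Fin c₀ × Fin nv)))
    (x : Fin c₀ → Fin p → ℝ) : EuclideanSpace ℝ (Fin c₂ × Fin p) :=
  (EuclideanSpace.equiv (Fin c₂ × Fin p) ℝ).symm fun q =>
    ∑ j, circConv p (zeroPad p nu (uFilt θ q.1 j)) (fun r => max (preAct p θ x j r) 0) q.2

open Finset

theorem fderiv_apply_eq_zero_of_const_along {E F : Type*} [NormedAddCommGroup E]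
    [NormedSpace ℝ E] [NormedAddCommGroup F] [NormedSpace ℝ F] {g : E → F} {γ : ℝ → E} {θ v : E}
    (hg : DifferentiableAt ℝ g θ) (hγ : HasDerivAt γ v 0) (hγ0 : γ 0 = θ)
    (hconst : ∀ s, g (γ s) = g θ) : fderiv ℝ g θ v = 0 := by
  subst hγ0
  have h := hg.hasFDerivAt.comp_hasDerivAt 0 hγ
  rw [show g ∘ γ = fun _ => g (γ 0) from funext hconst] at h
  exact h.unique (hasDerivAt_const 0 _)

theorem differentiableAt_max_zero {a : ℝ} (ha : a ≠ 0) :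
    DifferentiableAt ℝ (fun y : ℝ => max y 0) a := by
  rcases ha.lt_or_gt with hneg | hpos
  · refine (differentiableAt_const (0 : ℝ)).congr_of_eventuallyEq ?_
    filter_upwards [eventually_lt_nhds hneg] with y hy using max_eq_right hy.le
  · refine differentiableAt_id.congr_of_eventuallyEq ?_
    filter_upwards [eventually_gt_nhds hpos] with y hy using max_eq_left hy.le

section Rescaling

variable {ι : Type*}

noncomputable def expRescale (ε : ι → ℝ) (s : ℝ) (θ : EuclideanSpace ℝ ι) :
    EuclideanSpace ℝ ι :=
  WithLp.toLp 2 fun q => Real.exp (s * ε q) * θ q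

theorem expRescale_zero (ε : ι → ℝ) (θ : EuclideanSpace ℝ ι) : expRescale ε 0 θ = θ := by
  simp [expRescale]

variable [Fintype ι]

theorem hasDerivAt_expRescale (ε : ι → ℝ) (θ : EuclideanSpace ℝ ι) :
    HasDerivAt (fun s => expRescale ε s θ) (WithLp.toLp 2 fun q => ε q * θ q) 0 := by
  have h : HasDerivAt (fun s q => Real.exp (s * ε q) * θ q) (fun q => ε q * θ q) 0 := by
    refine hasDerivAt_pi.2 fun q => ?_
    simpa using ((hasDerivAt_id (0 : ℝ)).mul_const (ε q)).exp.mul_const (θ q)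
  exact (PiLp.hasFDerivAt_toLp 2 _).comp_hasDerivAt 0 h

theorem hasGradientAt_sum_mul_sq (ε : ι → ℝ) (θ : EuclideanSpace ℝ ι) :
    HasGradientAt (fun θ' : EuclideanSpace ℝ ι => ∑ q, ε q * θ' q ^ 2)
      ((2 : ℝ) • WithLp.toLp 2 fun q => ε q * θ q) θ := by
  rw [hasGradientAt_iff_hasFDerivAt]
  have hq : ∀ q, HasFDerivAt (fun θ' : EuclideanSpace ℝ ι => ε q * θ' q ^ 2)
      ((2 * ε q * θ q) • EuclideanSpace.proj (𝕜 := ℝ) q) θ := fun q => by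
    refine (((EuclideanSpace.proj (𝕜 := ℝ) q).hasFDerivAt (x := θ)).pow 2
      |>.const_mul (ε q)).congr_fderiv ?_
    ext d
    simp only [PiLp.proj_apply, Nat.add_one_sub_one, pow_one, nsmul_eq_mul, Nat.cast_ofNat,
      smul_apply, smul_eq_mul]
    ring
  refine (HasFDerivAt.fun_sum (u := univ) fun q _ => hq q).congr_fderiv ?_
  ext d
  simp only [_root_.sum_apply, smul_apply, PiLp.proj_apply, smul_eq_mul, map_smul,
    InnerProductSpace.toDual_apply_apply, PiLp.inner_apply, RCLike.inner_apply, Real.ringHom_apply,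
    mul_sum]
  exact sum_congr rfl fun q _ => by ring

theorem inner_gradient_sum_mul_sq_adjoint_eq_zero {F : Type*} [NormedAddCommGroup F]
    [InnerProductSpace ℝ F] [CompleteSpace F] {g : EuclideanSpace ℝ ι → F}
    {θ : EuclideanSpace ℝ ι} (ε : ι → ℝ) (hg : DifferentiableAt ℝ g θ)
    (hinv : ∀ s, g (expRescale ε s θ) = g θ) (w : F) :
    inner ℝ (gradient (fun θ' : EuclideanSpace ℝ ι => ∑ q, ε q * θ' q ^ 2) θ)
      ((fderiv ℝ g θ).adjoint w) = 0 := by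
  have hD : fderiv ℝ g θ (WithLp.toLp 2 fun q => ε q * θ q) = 0 :=
    fderiv_apply_eq_zero_of_const_along hg (hasDerivAt_expRescale ε θ) (expRescale_zero ε θ) hinv
  rw [(hasGradientAt_sum_mul_sq ε θ).gradient, real_inner_comm,
    ContinuousLinearMap.adjoint_inner_left, map_smul, hD, smul_zero, inner_zero_right]

end Rescaling

theorem zeroPad_smul (p n : ℕ) (c : ℝ) (a : Fin n → ℝ) :
    zeroPad p n (c • a) = c • zeroPad p n a := by
  ext s
  simp only [zeroPad, Pi.smul_apply]
  split_ifs <;> simp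

theorem circConv_smul_smul (p : ℕ) (c d : ℝ) (a b : Fin p → ℝ) :
    circConv p (c • a) (d • b) = (c * d) • circConv p a b := by
  ext r
  simp only [circConv, Pi.smul_apply, smul_eq_mul, mul_sum]
  exact sum_congr rfl fun s _ => by ring

theorem differentiable_zeroPad_apply {E : Type*} [NormedAddCommGroup E] [NormedSpace ℝ E]
    (p n : ℕ) {f : E → Fin n → ℝ} (hf : ∀ t, Differentiable ℝ fun y => f y t) (s : Fin p) :
    Differentiable ℝ fun y => zeroPad p n (f y) s := by
  unfold zeroPad
  split_ifs
  · exact hf _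
  · exact differentiable_const 0

section ConvNet

variable {p c₀ c₁ c₂ nu nv : ℕ}

theorem preAct_eq_smul
    {θ θ' : EuclideanSpace ℝ ((Fin c₂ × Fin c₁ × Fin nu) ⊕ (Fin c₁ × Fin c₀ × Fin nv))}
    (x : Fin c₀ → Fin p → ℝ) (j : Fin c₁) {c : ℝ} (hv : ∀ i, vFilt θ' j i = c • vFilt θ j i) :
    preAct p θ' x j = c • preAct p θ x j := by
  ext r
  simp only [preAct, hv, zeroPad_smul, Pi.smul_apply, smul_eq_mul, mul_sum]
  refine sum_congr rfl fun i _ => ?_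
  simpa using congrFun (circConv_smul_smul p c 1 (zeroPad p nv (vFilt θ j i)) (x i)) r

theorem convNet_eq_of_rescale
    {θ θ' : EuclideanSpace ℝ ((Fin c₂ × Fin c₁ × Fin nu) ⊕ (Fin c₁ × Fin c₀ × Fin nv))}
    (x : Fin c₀ → Fin p → ℝ) (a : Fin c₁ → ℝ) (ha : ∀ j, 0 < a j)
    (hu : ∀ k j, uFilt θ' k j = a j • uFilt θ k j)
    (hv : ∀ j i, vFilt θ' j i = (a j)⁻¹ • vFilt θ j i) :
    convNet p θ' x = convNet p θ x := by
  have hrelu : ∀ j, (fun r => max (preAct p θ' x j r) 0)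
      = (a j)⁻¹ • fun r => max (preAct p θ x j r) 0 := by
    intro j
    ext r
    rw [preAct_eq_smul x j (hv j)]
    simp [mul_max_of_nonneg _ _ (inv_nonneg.2 (ha j).le)]
  unfold convNet
  congr 1
  ext q
  refine sum_congr rfl fun j _ => ?_
  rw [hu, zeroPad_smul, hrelu, circConv_smul_smul, mul_inv_cancel₀ (ha j).ne', one_smul]

theorem differentiableAt_convNet
    {θ : EuclideanSpace ℝ ((Fin c₂ × Fin c₁ × Fin nu) ⊕ (Fin c₁ × Fin c₀ × Fin nv))}
    {x : Fin c₀ → Fin p → ℝ} (hx : ∀ j r, preAct p θ x j r ≠ 0) :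
    DifferentiableAt ℝ (fun θ' => convNet p θ' x) θ := by
  have hcoord : ∀ q, Differentiable ℝ fun θ' :
      EuclideanSpace ℝ ((Fin c₂ × Fin c₁ × Fin nu) ⊕ (Fin c₁ × Fin c₀ × Fin nv)) => θ' q :=
    fun q θ' => (PiLp.hasFDerivAt_apply 2 θ' q).differentiableAt
  have hpre : ∀ j r, Differentiable ℝ fun θ' => preAct p θ' x j r := fun j r => by
    unfold preAct circConv
    exact Differentiable.fun_sum fun i _ => Differentiable.fun_sum fun s _ =>
      (differentiable_zeroPad_apply p nv (fun t => hcoord _) s).mul_const _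
  rw [differentiableAt_piLp]
  intro q
  show DifferentiableAt ℝ (fun θ' => ∑ j, ∑ s,
    zeroPad p nu (uFilt θ' q.1 j) s * max (preAct p θ' x j (q.2 - s)) 0) θ
  exact DifferentiableAt.fun_sum fun j _ => DifferentiableAt.fun_sum fun s _ =>
    (differentiable_zeroPad_apply p nu (fun t => hcoord _) s _).fun_mul
      (DifferentiableAt.comp (g := fun y : ℝ => max y 0) θ
        (differentiableAt_max_zero (hx j (q.2 - s))) (hpre j (q.2 - s) θ))

def channelSign (j : Fin c₁) : (Fin c₂ × Fin c₁ × Fin nu) ⊕ (Fin c₁ × Fin c₀ × Fin nv) → ℝ :=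
  Sum.elim (fun a => if a.2.1 = j then 1 else 0) (fun b => if b.1 = j then -1 else 0)

theorem sum_channelSign_mul_sq (j : Fin c₁)
    (θ : EuclideanSpace ℝ ((Fin c₂ × Fin c₁ × Fin nu) ⊕ (Fin c₁ × Fin c₀ × Fin nv))) :
    ∑ q, channelSign j q * θ q ^ 2
      = (∑ k, ∑ t, (uFilt θ k j t) ^ 2) - ∑ i, ∑ t, (vFilt θ j i t) ^ 2 := by
  simp only [channelSign, uFilt, vFilt, Fintype.sum_sum_type, Fintype.sum_prod_type, ite_mul,
    one_mul, neg_one_mul, zero_mul, Sum.elim_inl, Sum.elim_inr, sub_eq_add_neg]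
  congr 1
  · refine sum_congr rfl fun k _ => ?_
    rw [Fintype.sum_eq_single j fun j' hj' => by simp [hj']]
    simp
  · rw [Fintype.sum_eq_single j fun j' hj' => by simp [hj'], ← sum_neg_distrib]
    simp

theorem convNet_expRescale_channelSign (x : Fin c₀ → Fin p → ℝ) (j : Fin c₁) (s : ℝ)
    (θ : EuclideanSpace ℝ ((Fin c₂ × Fin c₁ × Fin nu) ⊕ (Fin c₁ × Fin c₀ × Fin nv))) :
    convNet p (expRescale (channelSign j) s θ) x = convNet p θ x := by
  refine convNet_eq_of_rescale x (fun j' => Real.exp (if j' = j then s else 0))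
    (fun _ => Real.exp_pos _) (fun k j' => ?_) (fun j' i => ?_) <;> ext t <;>
    simp only [uFilt, vFilt, expRescale, channelSign, Pi.smul_apply, smul_eq_mul,
      Sum.elim_inl, Sum.elim_inr] <;> split_ifs <;> simp [Real.exp_neg]

end ConvNet

theorem conv_relu_conservation_laws_general
    (p c₀ c₁ c₂ nu nv : ℕ)
    (θ : EuclideanSpace ℝ ((Fin c₂ × Fin c₁ × Fin nu) ⊕ (Fin c₁ × Fin c₀ × Fin nv)))
    (x : Fin c₀ → Fin p → ℝ)
    (hx : ∀ (j' : Fin c₁) (r : Fin p), preAct p θ x j' r ≠ 0)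
    (j : Fin c₁) (w : EuclideanSpace ℝ (Fin c₂ × Fin p)) :
    DifferentiableAt ℝ (fun θ' => convNet p θ' x) θ ∧
    inner ℝ (gradient
        (fun θ' => (∑ k, ∑ t, (uFilt θ' k j t) ^ 2) - ∑ i, ∑ t, (vFilt θ' j i t) ^ 2) θ)
      ((fderiv ℝ (fun θ' => convNet p θ' x) θ).adjoint w) = (0:ℝ) := by
  refine ⟨differentiableAt_convNet hx, ?_⟩
  simp_rw [← sum_channelSign_mul_sq j]
  exact inner_gradient_sum_mul_sq_adjoint_eq_zero (channelSign j) (differentiableAt_convNet hx)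
    (fun s => convNet_expRescale_channelSign x j s θ) w

/-- The functions `h_j(θ) = ∑ₖ ‖u_{k,j}‖² − ∑ᵢ ‖v_{j,i}‖²` are conservation laws of the
two-layer multi-channel convolutive ReLU network: for every parameter `θ`, every input
`x` such that no entry of any hidden pre-activation vanishes, and every `w`, the network
is differentiable in `θ` and `⟨∇h_j(θ), ∂_θ g(θ, x)ᵀ w⟩ = 0`. -/
theorem conv_relu_conservation_laws
    (p c₀ c₁ c₂ nu nv : ℕ) (hp : 1 ≤ p) (hc₀ : 1 ≤ c₀) (hc₁ : 1 ≤ c₁) (hc₂ : 1 ≤ c₂)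
    (hnu : nu ≤ p) (hnv : nv ≤ p) (hnu1 : 1 ≤ nu) (hnv1 : 1 ≤ nv)
    (θ : EuclideanSpace ℝ ((Fin c₂ × Fin c₁ × Fin nu) ⊕ (Fin c₁ × Fin c₀ × Fin nv)))
    (x : Fin c₀ → Fin p → ℝ)
    (hx : ∀ (j' : Fin c₁) (r : Fin p), preAct p θ x j' r ≠ 0)
    (j : Fin c₁) (w : EuclideanSpace ℝ (Fin c₂ × Fin p)) :
    DifferentiableAt ℝ (fun θ' => convNet p θ' x) θ ∧
    inner ℝ (gradient
        (fun θ' => (∑ k, ∑ t, (uFilt θ' k j t) ^ 2) - ∑ i, ∑ t, (vFilt θ' j i t) ^ 2) θ)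
      ((fderiv ℝ (fun θ' => convNet p θ' x) θ).adjoint w) = (0:ℝ) :=
  conv_relu_conservation_laws_general p c₀ c₁ c₂ nu nv θ x hx j w
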